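/- Let $k$ be an algebraically closed field, $m \geq 1$, $1 \leq r' \leq r$, and $k_m = k[\epsilon]/(\epsilon^m)$. Let $N \subset k_m^{\oplus r}$ be a free $k_m$-submodule of rank $r'$. Then there exists $u \in \mathrm{GL}_r(k_m)$ with $u \equiv \mathrm{Id} \pmod{\epsilon}$ and a $k$-vector subspace $V \subset k^{\oplus r}$ such that $N = u \cdot (V \otimes_k k_m)$. -/

import Mathlib

open Polynomial

noncomputable section

variable (k : Type*) [Field k]

/-- The truncated polynomial ring `k_m = k[ε]/(ε^m)`. -/
def km (m : ℕ) : Type _ := Polynomial k ⧸ Ideal.span {(X : Polynomial k) ^ m}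

instance (m : ℕ) : CommRing (km k m) := Ideal.Quotient.commRing _
instance (m : ℕ) : Algebra k (km k m) := Ideal.Quotient.algebra k

/-- The class of `ε` in `k_m`. -/
def epsm (m : ℕ) : km k m := Ideal.Quotient.mk _ X

lemma epsm_pow_self (m : ℕ) : epsm k m ^ m = 0 :=
  show (Ideal.Quotient.mk (Ideal.span {(X : Polynomial k) ^ m}) X) ^ m = 0 by
    rw [← map_pow]
    exact Ideal.Quotient.eq_zero_iff_mem.mpr (Ideal.subset_span rfl)

/-- The reduction map `k_m → k`, `ε ↦ 0`. -/
def red (m : ℕ) (hm : 0 < m) : km k m →+* k :=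
  Ideal.Quotient.lift _ (evalRingHom (0 : k)) (by
    intro p hp
    rw [Ideal.mem_span_singleton] at hp
    obtain ⟨q, rfl⟩ := hp
    simp [zero_pow hm.ne'])

/-!
Choose a basis `e i` of `N` and let `w i` be its reduction mod `ε`. The `w i` are `k`-linearly
independent: if `∑ a i • w i = 0`, then `x = ∑ a i • e i` reduces to `0`, so `ε ^ (m - 1)` kills
`x`, and freeness forces `ε ^ (m - 1) * a i = 0`, i.e. `a i = 0`. Take `V = span k {w i}`. If `W`
and `A` are the matrices with columns `w i` and `e i`, and `P` is a left inverse of `W` over `k`,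
then `u = 1 + (A - W) P` satisfies `u W = A` and `u ≡ 1 mod ε` because `A ≡ W`; it is invertible
since `k_m` is local with residue map `red`.
-/

variable {k}

section TruncatedPolynomial

variable {m : ℕ}

lemma red_mk {hm : 0 < m} (p : k[X]) : red k m hm (Ideal.Quotient.mk _ p) = p.eval 0 :=
  Ideal.Quotient.lift_mk _ _ _

lemma red_algebraMap {hm : 0 < m} (a : k) : red k m hm (algebraMap k (km k m) a) = a :=
  (red_mk (C a)).trans eval_C

lemma exists_eq_epsm_mul_of_red_eq_zero {hm : 0 < m} {y : km k m} (h : red k m hm y = 0) :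
    ∃ t, y = epsm k m * t := by
  obtain ⟨p, rfl⟩ := Ideal.Quotient.mk_surjective y
  rw [red_mk, ← coeff_zero_eq_eval_zero, ← X_dvd_iff] at h
  obtain ⟨q, rfl⟩ := h
  exact ⟨Ideal.Quotient.mk _ q, map_mul _ _ _⟩

lemma epsm_pow_pred_mul_eq_zero_of_red_eq_zero {hm : 0 < m} {y : km k m} (h : red k m hm y = 0) :
    epsm k m ^ (m - 1) * y = 0 := by
  obtain ⟨t, rfl⟩ := exists_eq_epsm_mul_of_red_eq_zero h
  rw [← mul_assoc, ← pow_succ, Nat.sub_add_cancel hm, epsm_pow_self, zero_mul]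

lemma eq_zero_of_epsm_pow_pred_mul_algebraMap_eq_zero (hm : 0 < m) {a : k}
    (h : epsm k m ^ (m - 1) * algebraMap k (km k m) a = 0) : a = 0 := by
  have hdvd : X ^ m ∣ C a * X ^ (m - 1) := by
    rw [← Ideal.mem_span_singleton, ← Ideal.Quotient.eq_zero_iff_mem, mul_comm, map_mul,
      map_pow]
    exact h
  simpa [coeff_C_mul_X_pow] using X_pow_dvd_iff.mp hdvd (m - 1) (Nat.sub_lt hm one_pos)

-- `y` is the unit `red y` plus the nilpotent `y - red y`.
instance {hm : 0 < m} : IsLocalHom (red k m hm) where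
  map_nonunit y hy := by
    obtain ⟨t, ht⟩ := exists_eq_epsm_mul_of_red_eq_zero (hm := hm)
      (y := y - algebraMap k (km k m) (red k m hm y)) (by rw [map_sub, red_algebraMap, sub_self])
    have hnil : IsNilpotent (y - algebraMap k (km k m) (red k m hm y)) :=
      ⟨m, by rw [ht, mul_pow, epsm_pow_self, zero_mul]⟩
    simpa using hnil.isUnit_add_right_of_commute (hy.map (algebraMap k (km k m))) (.all _ _)

theorem linearIndependent_red_comp (hm : 0 < m) {ι n : Type*} [Fintype ι]
    {e : ι → n → km k m} (he : LinearIndependent (km k m) e) :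
    LinearIndependent k (fun i => red k m hm ∘ e i) := by
  rw [Fintype.linearIndependent_iff] at he ⊢
  intro a ha i
  have hred : ∀ j, red k m hm ((∑ i, algebraMap k (km k m) (a i) • e i) j) = 0 := by
    intro j
    simpa [map_sum, Algebra.smul_def, red_algebraMap] using congrFun ha j
  have hsum : ∑ i, (epsm k m ^ (m - 1) * algebraMap k (km k m) (a i)) • e i = 0 := by
    simp_rw [← smul_smul, ← Finset.smul_sum]
    exact funext fun j => epsm_pow_pred_mul_eq_zero_of_red_eq_zero (hred j)
  exact eq_zero_of_epsm_pow_pred_mul_algebraMap_eq_zero hm (he _ hsum i)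

end TruncatedPolynomial

section Matrix

open Matrix

theorem Matrix.isUnit_of_map_eq_one {n R S : Type*} [Fintype n] [DecidableEq n] [CommRing R]
    [CommRing S] (f : R →+* S) [IsLocalHom f] {u : Matrix n n R} (h : u.map f = 1) :
    IsUnit u := by
  rw [isUnit_iff_isUnit_det]
  apply IsUnit.of_map f
  rw [f.map_det, RingHom.mapMatrix_apply, h, det_one]
  exact isUnit_one

theorem Matrix.exists_mul_eq_one_of_linearIndependent_col {m n K : Type*} [Fintype m]
    [Fintype n] [DecidableEq n] [Field K] {M : Matrix m n K} (h : LinearIndependent K M.col) :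
    ∃ P : Matrix n m K, P * M = 1 := by
  classical
  obtain ⟨g, hg⟩ := M.mulVecLin.exists_leftInverse_of_injective
    (LinearMap.ker_eq_bot.mpr (mulVec_injective_iff.mpr h))
  refine ⟨LinearMap.toMatrix' g, toLin'.injective ?_⟩
  rw [toLin'_mul, toLin'_toMatrix', toLin'_one, toLin'_apply', hg]

theorem Matrix.exists_map_eq_one_mulVec_col_eq {m n R S : Type*} [Fintype m] [Fintype n]
    [DecidableEq m] [DecidableEq n] [Ring R] [Ring S] (f : R →+* S) {A B : Matrix m n R}
    {P : Matrix n m R} (hP : P * B = 1) (hAB : A.map f = B.map f) :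
    ∃ u : Matrix m m R, u.map f = 1 ∧ ∀ j, u *ᵥ B.col j = A.col j := by
  refine ⟨1 + (A - B) * P, ?_, fun j => ?_⟩
  · rw [Matrix.map_add f (map_add f), Matrix.map_mul, Matrix.map_sub f (map_sub f), hAB, sub_self,
      Matrix.zero_mul, add_zero, Matrix.map_one f (map_zero f) (map_one f)]
  · rw [← mulVec_single_one, mulVec_mulVec, Matrix.add_mul, Matrix.mul_assoc, hP, Matrix.mul_one,
      Matrix.one_mul, add_sub_cancel, mulVec_single_one]

end Matrix

theorem Submodule.span_image_span_of_tower {K R M M' : Type*} [CommSemiring K] [Semiring R]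
    [Algebra K R] [AddCommMonoid M] [Module K M] [AddCommMonoid M'] [Module K M']
    [Module R M'] [IsScalarTower K R M'] (f : M →ₗ[K] M') (s : Set M) :
    span R (f '' span K s) = span R (f '' s) := by
  rw [← Submodule.map_coe, Submodule.map_span, Submodule.span_span_of_tower]

variable (k)

theorem free_submodule_eq_unipotent_smul_subspace
    (m r r' : ℕ) (hm : 0 < m)
    (N : Submodule (km k m) (Fin r → km k m))
    (hN : Nonempty (N ≃ₗ[km k m] (Fin r' → km k m))) :
    ∃ u : Matrix (Fin r) (Fin r) (km k m), IsUnit u ∧ u.map (red k m hm) = 1 ∧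
      ∃ V : Submodule k (Fin r → k),
        N = Submodule.map u.mulVecLin
          (Submodule.span (km k m)
            ((fun (v : Fin r → k) (i : Fin r) => algebraMap k (km k m) (v i)) ''
              (V : Set (Fin r → k)))) := by
  obtain ⟨E⟩ := hN
  let b := Module.Basis.ofEquivFun E
  let e : Fin r' → Fin r → km k m := fun i => b i
  let w : Fin r' → Fin r → k := fun i => red k m hm ∘ e i
  let W := (Matrix.of w).transpose
  obtain ⟨P, hP⟩ := Matrix.exists_mul_eq_one_of_linearIndependent_col (M := W)
    (linearIndependent_red_comp hm (b.linearIndependent.map' N.subtype N.ker_subtype))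
  obtain ⟨u, hu, huW⟩ := Matrix.exists_map_eq_one_mulVec_col_eq (red k m hm)
    (A := (Matrix.of e).transpose) (B := W.map (algebraMap k (km k m)))
    (P := P.map (algebraMap k (km k m)))
    (by rw [← Matrix.map_mul (f := algebraMap k (km k m)), hP,
      Matrix.map_one _ (map_zero _) (map_one _)])
    (by ext; simp [W, w, red_algebraMap])
  refine ⟨u, u.isUnit_of_map_eq_one (red k m hm) hu, hu, Submodule.span k (Set.range w), ?_⟩
  change N = Submodule.map u.mulVecLin (Submodule.span (km k m)
    ((Algebra.linearMap k (km k m)).compLeft (Fin r) '' Submodule.span k (Set.range w)))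
  rw [Submodule.span_image_span_of_tower, ← Set.range_comp, Submodule.map_span,
    ← Set.range_comp]
  have hue :
      ⇑u.mulVecLin ∘ (Algebra.linearMap k (km k m)).compLeft (Fin r) ∘ w = N.subtype ∘ b :=
    funext huW
  rw [hue, Set.range_comp, Submodule.span_image, b.span_eq, Submodule.map_subtype_top]

end
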